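/- For every real number k with 0 < k < 1, setting k' = √(1 − k²), the complete elliptic integral of the first kind satisfies the descending Landen transformation K(k) = (2/(1+k')) · K((1−k')/(1+k')). -/

import Mathlib

open Real

/-- Complete elliptic integral of the first kind. -/
noncomputable def completeEllipticK (k : ℝ) : ℝ :=
  ∫ θ in (0:ℝ)..(π/2), 1 / Real.sqrt (1 - k^2 * Real.sin θ ^ 2)

/-!
Write `c = k'`, so that `1 - k² sin² θ = cos² θ + c² sin² θ`. The Landen substitution
`φ = θ + arctan (c tan θ)` maps `[0, π/2]` onto `[0, π]`, and with `r = √(cos² θ + c² sin² θ)` one has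
`sin φ = (1 + c) sin θ cos θ / r` and `dφ/dθ = (1 + c)(cos² θ + c sin² θ) / r²`, while
`√(1 - k₁² sin² φ) = (cos² θ + c sin² θ) / r` for `k₁ = (1 - c)/(1 + c)`. Hence
`dφ / √(1 - k₁² sin² φ) = (1 + c) dθ / r`, and the integral over `[0, π]` is twice `K(k₁)` by
the symmetry `θ ↦ π - θ`.
-/

theorem continuous_one_div_sqrt_one_sub_sq_mul_sin_sq {k : ℝ} (hk : k ^ 2 < 1) :
    Continuous fun θ : ℝ => 1 / √(1 - k ^ 2 * sin θ ^ 2) := by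
  refine continuous_const.div (by fun_prop) fun θ => (sqrt_pos.2 ?_).ne'
  nlinarith [sin_sq_le_one θ, sq_nonneg k]

theorem integral_comp_sin_zero_pi {f : ℝ → ℝ}
    (hf : IntervalIntegrable (fun θ => f (sin θ)) MeasureTheory.volume 0 π) :
    ∫ θ in 0..π, f (sin θ) = 2 * ∫ θ in 0..π / 2, f (sin θ) := by
  have hπ : π / 2 ∈ Set.uIcc 0 π := Set.mem_uIcc_of_le (by positivity) (by linarith [pi_pos])
  have h_upper : ∫ θ in π / 2..π, f (sin θ) = ∫ θ in 0..π / 2, f (sin θ) := by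
    simpa only [sin_pi_sub, sub_zero, sub_half] using
      (intervalIntegral.integral_comp_sub_left (fun θ => f (sin θ)) π (a := 0) (b := π / 2)).symm
  rw [← intervalIntegral.integral_add_adjacent_intervals
    (hf.mono_set (Set.uIcc_subset_uIcc_left hπ))
    (hf.mono_set (Set.uIcc_subset_uIcc_right hπ)), h_upper]
  ring

theorem two_mul_completeEllipticK {k : ℝ} (hk : k ^ 2 < 1) :
    2 * completeEllipticK k = ∫ θ in 0..π, 1 / √(1 - k ^ 2 * sin θ ^ 2) :=
  (integral_comp_sin_zero_pi (f := fun x => 1 / √(1 - k ^ 2 * x ^ 2))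
    ((continuous_one_div_sqrt_one_sub_sq_mul_sin_sq hk).intervalIntegrable _ _)).symm

/-- The classical Landen substitution `φ = θ + arctan (c tan θ)`, i.e. `tan (φ - θ) = c tan θ`,
written so that it is smooth across `θ = π / 2`: `tan (2θ - φ) = (1 - c) tan θ / (1 + c tan² θ)`. -/
noncomputable def landenMap (c θ : ℝ) : ℝ :=
  2 * θ - arctan ((1 - c) * sin θ * cos θ / (cos θ ^ 2 + c * sin θ ^ 2))

theorem landenMap_zero (c : ℝ) : landenMap c 0 = 0 := by
  simp [landenMap]

theorem landenMap_pi_div_two (c : ℝ) : landenMap c (π / 2) = π := by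
  simp [landenMap, mul_div_cancel₀]

theorem cos_sq_add_mul_sin_sq_pos {c : ℝ} (hc : 0 < c) (θ : ℝ) :
    0 < cos θ ^ 2 + c * sin θ ^ 2 := by
  rcases eq_or_ne (sin θ) 0 with h | h
  · nlinarith [sin_sq_add_cos_sq θ]
  · positivity

theorem landen_sq_add_sq (c θ : ℝ) :
    (cos θ ^ 2 + c * sin θ ^ 2) ^ 2 + ((1 - c) * sin θ * cos θ) ^ 2
      = cos θ ^ 2 + c ^ 2 * sin θ ^ 2 := by
  linear_combination (cos θ ^ 2 + c ^ 2 * sin θ ^ 2) * sin_sq_add_cos_sq θ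

theorem hasDerivAt_landenMap {c : ℝ} (hc : 0 < c) (θ : ℝ) :
    HasDerivAt (landenMap c)
      ((1 + c) * (cos θ ^ 2 + c * sin θ ^ 2) / (cos θ ^ 2 + c ^ 2 * sin θ ^ 2)) θ := by
  have hD := cos_sq_add_mul_sin_sq_pos hc θ
  have hE := cos_sq_add_mul_sin_sq_pos (pow_pos hc 2) θ
  have hN : HasDerivAt (fun θ => (1 - c) * sin θ * cos θ)
      ((1 - c) * cos θ * cos θ + (1 - c) * sin θ * -sin θ) θ :=
    ((hasDerivAt_sin θ).const_mul _).mul (hasDerivAt_cos θ)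
  have hD' : HasDerivAt (fun θ => cos θ ^ 2 + c * sin θ ^ 2)
      (2 * cos θ * -sin θ + c * (2 * sin θ * cos θ)) θ :=
    (((hasDerivAt_cos θ).fun_pow 2).add (((hasDerivAt_sin θ).fun_pow 2).const_mul c)).congr_deriv
      (by ring)
  refine (((hasDerivAt_id θ).const_mul 2).sub (hN.div hD' hD.ne').arctan).congr_deriv ?_
  rw [← landen_sq_add_sq] at hE ⊢
  simp only [Pi.div_apply]
  field_simp
  linear_combination (1 + c) * (cos θ ^ 2 + c * sin θ ^ 2) * sin_sq_add_cos_sq θ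

theorem sin_landenMap {c : ℝ} (hc : 0 < c) (θ : ℝ) :
    sin (landenMap c θ) = (1 + c) * sin θ * cos θ / √(cos θ ^ 2 + c ^ 2 * sin θ ^ 2) := by
  have hE := sqrt_pos.2 (cos_sq_add_mul_sin_sq_pos (pow_pos hc 2) θ)
  rw [← landen_sq_add_sq] at hE ⊢
  rw [landenMap, sin_sub, sin_arctan, cos_arctan, sin_two_mul, cos_two_mul]
  have hD := cos_sq_add_mul_sin_sq_pos hc θ
  set D := cos θ ^ 2 + c * sin θ ^ 2
  set N := (1 - c) * sin θ * cos θ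
  have hroot : √(1 + (N / D) ^ 2) = √(D ^ 2 + N ^ 2) / D := by
    rw [show 1 + (N / D) ^ 2 = (D ^ 2 + N ^ 2) / D ^ 2 by field_simp, sqrt_div' _ (sq_nonneg D),
      sqrt_sq hD.le]
  rw [hroot]
  field_simp
  linear_combination 2 * c * sin θ * cos θ * sin_sq_add_cos_sq θ

theorem sqrt_one_sub_sq_mul_sin_landenMap_sq {c : ℝ} (hc : 0 < c) (θ : ℝ) :
    √(1 - ((1 - c) / (1 + c)) ^ 2 * sin (landenMap c θ) ^ 2)
      = (cos θ ^ 2 + c * sin θ ^ 2) / √(cos θ ^ 2 + c ^ 2 * sin θ ^ 2) := by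
  have hD := cos_sq_add_mul_sin_sq_pos hc θ
  have hE := cos_sq_add_mul_sin_sq_pos (pow_pos hc 2) θ
  rw [sin_landenMap hc, ← sqrt_sq hD.le, ← sqrt_div' _ hE.le]
  congr 1
  rw [div_pow, div_pow, sq_sqrt hE.le, ← landen_sq_add_sq]
  field_simp
  ring

theorem landen_integrand_mul_deriv {c : ℝ} (hc : 0 < c) (θ : ℝ) :
    1 / √(1 - ((1 - c) / (1 + c)) ^ 2 * sin (landenMap c θ) ^ 2)
        * ((1 + c) * (cos θ ^ 2 + c * sin θ ^ 2) / (cos θ ^ 2 + c ^ 2 * sin θ ^ 2))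
      = (1 + c) * (1 / √(cos θ ^ 2 + c ^ 2 * sin θ ^ 2)) := by
  have hD := cos_sq_add_mul_sin_sq_pos hc θ
  have hE := cos_sq_add_mul_sin_sq_pos (pow_pos hc 2) θ
  have hr := sqrt_pos.2 hE
  have hr_sq := sq_sqrt hE.le
  rw [sqrt_one_sub_sq_mul_sin_landenMap_sq hc]
  set r := √(cos θ ^ 2 + c ^ 2 * sin θ ^ 2)
  rw [← hr_sq]
  field_simp

theorem integral_one_div_sqrt_cos_sq_add_sq_mul_sin_sq {c : ℝ} (hc : 0 < c) :
    ∫ θ in 0..π / 2, 1 / √(cos θ ^ 2 + c ^ 2 * sin θ ^ 2)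
      = 2 / (1 + c) * completeEllipticK ((1 - c) / (1 + c)) := by
  have hk : ((1 - c) / (1 + c)) ^ 2 < 1 := by
    rw [div_pow, div_lt_one (by positivity)]
    nlinarith
  have hderiv_cont : Continuous fun θ =>
      (1 + c) * (cos θ ^ 2 + c * sin θ ^ 2) / (cos θ ^ 2 + c ^ 2 * sin θ ^ 2) :=
    (by fun_prop : Continuous _).div (by fun_prop)
      fun θ => (cos_sq_add_mul_sin_sq_pos (pow_pos hc 2) θ).ne'
  have hsubst := intervalIntegral.integral_comp_mul_deriv (a := 0) (b := π / 2)
    (fun θ _ => hasDerivAt_landenMap hc θ) hderiv_cont.continuousOn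
    (continuous_one_div_sqrt_one_sub_sq_mul_sin_sq hk)
  simp only [Function.comp_apply, landen_integrand_mul_deriv hc, intervalIntegral.integral_const_mul,
    landenMap_zero, landenMap_pi_div_two, ← two_mul_completeEllipticK hk] at hsubst
  field_simp
  linarith

/-- Descending Landen transformation for the complete elliptic integral of the
first kind: `K(k) = (2/(1+k')) K((1−k')/(1+k'))` where `k' = √(1−k²)`, `0 < k < 1`. -/
theorem landen_K (k : ℝ) (hk0 : 0 < k) (hk1 : k < 1) :
    completeEllipticK k =
      2 / (1 + Real.sqrt (1 - k^2)) *
        completeEllipticK ((1 - Real.sqrt (1 - k^2)) / (1 + Real.sqrt (1 - k^2))) := by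
  have hk : 0 < 1 - k ^ 2 := by nlinarith
  rw [← integral_one_div_sqrt_cos_sq_add_sq_mul_sin_sq (sqrt_pos.2 hk), sq_sqrt hk.le,
    completeEllipticK]
  congr! 4 with θ
  linear_combination -sin_sq_add_cos_sq θ
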